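/- Fix a positive integer d. There exist constants c, C > 0 such that for every skew shape λ/ν with n = |λ/ν| cells, c·aft(λ/ν)·n^d ≤ Σ_{k=1}^n k^d − Σ_{c∈λ/ν} h_c^d ≤ C·aft(λ/ν)·n^d; that is, Σ_{k=1}^{|λ/ν|} k^d − Σ_{c∈λ/ν} h_c^d = Θ(aft(λ/ν)·|λ/ν|^d) uniformly over all skew shapes. -/

import Mathlib

open Finset MeasureTheory Filter ProbabilityTheory

/-- A standard Young tableau (standard filling) of an arbitrary finite set `s` of cells in
`ℕ × ℕ` (matrix/English coordinates: `c.1` is the row index, `c.2` the column index).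
The entry of the cell `c` is `(toEquiv c : ℕ) + 1`, so the entries are `1, …, s.card`,
each occurring exactly once, and entries strictly increase along rows (left to right)
and down columns. -/
structure SYTOf (s : Finset (ℕ × ℕ)) where
  toEquiv : {c : ℕ × ℕ // c ∈ s} ≃ Fin s.card
  row_lt : ∀ c c' : {c : ℕ × ℕ // c ∈ s},
    c.1.1 = c'.1.1 → c.1.2 < c'.1.2 → toEquiv c < toEquiv c'
  col_lt : ∀ c c' : {c : ℕ × ℕ // c ∈ s},
    c.1.2 = c'.1.2 → c.1.1 < c'.1.1 → toEquiv c < toEquiv c'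

namespace SYTOf

variable {s : Finset (ℕ × ℕ)}

/-- `k ∈ {1, …, n-1}` is a descent of `T` if the entry `k + 1` appears in a strictly
lower row than the entry `k`.  (The cell with entry `k` is `T.toEquiv.symm ⟨k - 1, _⟩`.) -/
def IsDescent (T : SYTOf s) (k : ℕ) : Prop :=
  ∃ h : k < s.card, 1 ≤ k ∧
    (T.toEquiv.symm ⟨k - 1, lt_of_le_of_lt (Nat.sub_le k 1) h⟩).1.1 <
      (T.toEquiv.symm ⟨k, h⟩).1.1

open scoped Classical in
/-- The major index of a standard Young tableau: the sum of its descents. -/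
noncomputable def maj (T : SYTOf s) : ℕ :=
  ∑ k ∈ Finset.range s.card, if T.IsDescent k then k else 0

noncomputable instance : Fintype (SYTOf s) :=
  Fintype.ofInjective toEquiv (fun T T' h => by cases T; cases T'; simpa using h)

end SYTOf

/-- The mean of the major index on `SYTOf s` under the uniform distribution. -/
noncomputable def sytMean (s : Finset (ℕ × ℕ)) : ℝ :=
  (∑ T : SYTOf s, (T.maj : ℝ)) / (Fintype.card (SYTOf s) : ℝ)

/-- The variance of the major index on `SYTOf s` under the uniform distribution. -/
noncomputable def sytVar (s : Finset (ℕ × ℕ)) : ℝ :=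
  (∑ T : SYTOf s, ((T.maj : ℝ) - sytMean s) ^ 2) / (Fintype.card (SYTOf s) : ℝ)

/-- The cumulative distribution function of the normalized major index random variable
`X* = (X − μ)/σ` on `SYTOf s` under the uniform distribution. -/
noncomputable def sytNormCDF (s : Finset (ℕ × ℕ)) (t : ℝ) : ℝ :=
  (Nat.card {T : SYTOf s // ((T.maj : ℝ) - sytMean s) / Real.sqrt (sytVar s) ≤ t} : ℝ) /
    (Fintype.card (SYTOf s) : ℝ)

/-- The cumulative distribution function of the standard normal distribution. -/
noncomputable def stdNormalCDF (t : ℝ) : ℝ :=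
  ∫ x in Set.Iic t, Real.exp (-x ^ 2 / 2) / Real.sqrt (2 * Real.pi)

/-- `aft` of a partition: the number of cells outside the larger of the first row and the
first column, i.e. `|λ| − max (λ₁, λ₁')`. -/
def aftY (μ : YoungDiagram) : ℕ := μ.card - max (μ.rowLen 0) (μ.colLen 0)

/-- `b(λ) = Σ (i − 1) λᵢ`, i.e. the sum over all cells of the (0-indexed) row index. -/
def bstat (μ : YoungDiagram) : ℕ := ∑ c ∈ μ.cells, c.1

/-- The hook length of the cell `c` in the cell set `s`: the number of cells of `s`
lying weakly to the right of `c` in its row or strictly below `c` in its column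
(including `c` itself). -/
def skewHook (s : Finset (ℕ × ℕ)) (c : ℕ × ℕ) : ℕ :=
  (s.filter fun c' => (c'.1 = c.1 ∧ c.2 ≤ c'.2) ∨ (c'.2 = c.2 ∧ c.1 < c'.1)).card

/-- The maximal number of cells of `s` contained in a single row or a single column. -/
def rowColMax (s : Finset (ℕ × ℕ)) : ℕ :=
  max (s.sup fun c => (s.filter fun c' => c'.1 = c.1).card)
      (s.sup fun c => (s.filter fun c' => c'.2 = c.2).card)

/-- `aft` of a skew shape (given by its cell set `s`): `|s| − m` where `m` is the maximal
number of cells of `s` in a single row or column. -/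
def skewAft (s : Finset (ℕ × ℕ)) : ℕ := s.card - rowColMax s

namespace HookAux

/-- the hook cell set -/
def hookF (s : Finset (ℕ × ℕ)) (c : ℕ × ℕ) : Finset (ℕ × ℕ) :=
  s.filter fun c' => (c'.1 = c.1 ∧ c.2 ≤ c'.2) ∨ (c'.2 = c.2 ∧ c.1 < c'.1)

def armF (s : Finset (ℕ × ℕ)) (c : ℕ × ℕ) : Finset (ℕ × ℕ) :=
  s.filter fun x => x.1 = c.1 ∧ c.2 ≤ x.2

def legF (s : Finset (ℕ × ℕ)) (c : ℕ × ℕ) : Finset (ℕ × ℕ) :=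
  s.filter fun x => x.2 = c.2 ∧ c.1 < x.1

lemma skewHook_eq_card (s : Finset (ℕ × ℕ)) (c : ℕ × ℕ) :
    skewHook s c = (hookF s c).card := rfl

lemma hookF_eq_union (s : Finset (ℕ × ℕ)) (c : ℕ × ℕ) :
    hookF s c = armF s c ∪ legF s c := by
  rw [hookF, armF, legF, ← Finset.filter_or]

lemma disj_arm_leg (s : Finset (ℕ × ℕ)) (c : ℕ × ℕ) :
    Disjoint (armF s c) (legF s c) := by
  rw [Finset.disjoint_left]
  intro x hx hx'
  simp only [armF, legF, mem_filter] at hx hx'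
  omega

lemma hook_eq_arm_add_leg (s : Finset (ℕ × ℕ)) (c : ℕ × ℕ) :
    skewHook s c = (armF s c).card + (legF s c).card := by
  rw [skewHook_eq_card, hookF_eq_union, card_union_of_disjoint (disj_arm_leg s c)]

lemma one_le_hook {s : Finset (ℕ × ℕ)} {c : ℕ × ℕ} (hc : c ∈ s) :
    1 ≤ skewHook s c := by
  rw [skewHook_eq_card]
  refine card_pos.2 ⟨c, ?_⟩
  simp [hookF, hc]

lemma hook_le_card (s : Finset (ℕ × ℕ)) (c : ℕ × ℕ) :
    skewHook s c ≤ s.card := card_filter_le _ _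

/-- Claim (i): at most `n+1-t` cells have hook at least `t`; valid for any finite cell set. -/
lemma claimI : ∀ (s : Finset (ℕ × ℕ)) (t : ℕ), 1 ≤ t → t ≤ s.card + 1 →
    (s.filter fun c => t ≤ skewHook s c).card + t ≤ s.card + 1 := by
  intro s
  induction s using Finset.strongInduction with
  | _ s ih =>
    intro t ht htn
    rcases Nat.lt_or_ge t 2 with h2 | h2
    · have h1 : t = 1 := by omega
      subst h1
      have := card_filter_le s (fun c => 1 ≤ skewHook s c)
      omega
    · rcases s.eq_empty_or_nonempty with rfl | hne
      · simp at htn ⊢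
        omega
      · obtain ⟨c0, hc0, hmax⟩ := s.exists_max_image (fun c => c.1 + c.2) hne
        have hhook1 : skewHook s c0 = 1 := by
          rw [skewHook_eq_card]
          have : hookF s c0 = {c0} := by
            apply Finset.Subset.antisymm
            · intro x hx
              simp only [hookF, mem_filter] at hx
              obtain ⟨hxs, hcond⟩ := hx
              have hle := hmax x hxs
              simp only [mem_singleton]
              rcases hcond with ⟨h1, h2⟩ | ⟨h1, h2⟩
              · have : x.2 = c0.2 := by omega
                exact Prod.ext h1 this
              · omega
            · intro x hx
              simp only [mem_singleton] at hx
              subst hx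
              simp [hookF, hc0]
          rw [this, card_singleton]
        set s' := s.erase c0 with hs'
        have hss : s' ⊂ s := Finset.erase_ssubset hc0
        have hookdrop : ∀ c, skewHook s c ≤ skewHook s' c + 1 := by
          intro c
          rw [skewHook_eq_card, skewHook_eq_card]
          have hsub : hookF s c ⊆ insert c0 (hookF s' c) := by
            intro x hx
            simp only [hookF, mem_filter] at hx
            by_cases hxc : x = c0
            · simp [hxc]
            · simp only [mem_insert, hookF, mem_filter, hs', Finset.mem_erase]
              exact Or.inr ⟨⟨hxc, hx.1⟩, hx.2⟩
          calc (hookF s c).card ≤ (insert c0 (hookF s' c)).card := card_le_card hsub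
            _ ≤ (hookF s' c).card + 1 := card_insert_le _ _
        have hfsub : (s.filter fun c => t ≤ skewHook s c)
            ⊆ (s'.filter fun c => t - 1 ≤ skewHook s' c) := by
          intro x hx
          simp only [mem_filter] at hx ⊢
          have hxc0 : x ≠ c0 := by
            intro h
            rw [h, hhook1] at hx
            omega
          refine ⟨Finset.mem_erase.2 ⟨hxc0, hx.1⟩, ?_⟩
          have := hookdrop x
          omega
        have hcard' : s'.card + 1 = s.card := by
          rw [hs', Finset.card_erase_of_mem hc0]
          have : 1 ≤ s.card := Finset.card_pos.2 hne
          omega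
        have hih := ih s' hss (t - 1) (by omega) (by omega)
        have hcle := card_le_card hfsub
        omega

/-- telescoping sum -/
lemma telescope (d : ℕ) (hd : 1 ≤ d) : ∀ k : ℕ,
    (∑ t ∈ Finset.Icc 1 k, (t ^ d - (t - 1) ^ d)) = k ^ d := by
  intro k
  induction k with
  | zero => simp [Nat.zero_pow (by omega : 0 < d)]
  | succ k ihk =>
    rw [Finset.sum_Icc_succ_top (by omega), ihk]
    simp only [Nat.add_sub_cancel]
    have : k ^ d ≤ (k+1) ^ d := Nat.pow_le_pow_left (by omega) d
    omega

lemma pow_sum_identity (d : ℕ) (hd : 1 ≤ d) : ∀ n : ℕ,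
    (∑ k ∈ Finset.Icc 1 n, k ^ d)
      = ∑ t ∈ Finset.Icc 1 n, (t ^ d - (t - 1) ^ d) * (n + 1 - t) := by
  intro n
  induction n with
  | zero => simp
  | succ n ihn =>
    rw [Finset.sum_Icc_succ_top (by omega : 1 ≤ n + 1), ihn]
    have hsplit : ∀ t ∈ Finset.Icc 1 (n+1),
        (t ^ d - (t - 1) ^ d) * (n + 1 + 1 - t)
          = (t ^ d - (t - 1) ^ d) * (n + 1 - t) + (t ^ d - (t - 1) ^ d) := by
      intro t htmem
      rw [Finset.mem_Icc] at htmem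
      have : n + 1 + 1 - t = (n + 1 - t) + 1 := by omega
      rw [this, Nat.mul_add, Nat.mul_one]
    rw [Finset.sum_congr rfl hsplit, Finset.sum_add_distrib, telescope d hd (n+1)]
    rw [Finset.sum_Icc_succ_top (by omega : 1 ≤ n + 1)]
    have : n + 1 - (n + 1) = 0 := by omega
    rw [this, Nat.mul_zero]
    omega

lemma hook_sum_identity (d : ℕ) (hd : 1 ≤ d) (s : Finset (ℕ × ℕ)) :
    (∑ c ∈ s, (skewHook s c) ^ d)
      = ∑ t ∈ Finset.Icc 1 s.card,
          (t ^ d - (t - 1) ^ d) * (s.filter fun c => t ≤ skewHook s c).card := by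
  have hrw : ∀ t, (t ^ d - (t - 1) ^ d) * (s.filter fun c => t ≤ skewHook s c).card
      = ∑ c ∈ s, (if t ≤ skewHook s c then (t ^ d - (t - 1) ^ d) else 0) := by
    intro t
    rw [Finset.card_filter, Finset.mul_sum]
    refine Finset.sum_congr rfl fun c _ => ?_
    split <;> simp
  rw [Finset.sum_congr rfl (fun t _ => hrw t), Finset.sum_comm]
  refine Finset.sum_congr rfl fun c hc => ?_
  have h1 : 1 ≤ skewHook s c := one_le_hook hc
  have h2 : skewHook s c ≤ s.card := hook_le_card s c
  rw [← Finset.sum_filter]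
  have : (Finset.Icc 1 s.card).filter (fun t => t ≤ skewHook s c)
      = Finset.Icc 1 (skewHook s c) := by
    ext t
    simp only [Finset.mem_filter, Finset.mem_Icc]
    omega
  rw [this, telescope d hd]

lemma w_ge (d t : ℕ) (hd : 1 ≤ d) (ht : 1 ≤ t) :
    t ^ (d - 1) ≤ t ^ d - (t - 1) ^ d := by
  obtain ⟨e, rfl⟩ : ∃ e, d = e + 1 := ⟨d - 1, by omega⟩
  obtain ⟨u, rfl⟩ : ∃ u, t = u + 1 := ⟨t - 1, by omega⟩
  simp only [Nat.add_sub_cancel]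
  have h1 : (u+1) ^ (e+1) = (u+1) ^ e * u + (u+1) ^ e := by ring
  have h2 : u ^ (e+1) ≤ (u+1) ^ e * u := by
    rw [pow_succ]
    exact Nat.mul_le_mul_right u (Nat.pow_le_pow_left (by omega) e)
  omega


/-- Monotonicity of leg lengths along rows; holds for skew shapes. -/
def LegMono (s : Finset (ℕ × ℕ)) : Prop :=
  ∀ i j j' : ℕ, (i, j) ∈ s → (i, j') ∈ s → j ≤ j' →
    (legF s (i, j')).card ≤ (legF s (i, j)).card

lemma legMono_skew (lam nu : YoungDiagram) (h : nu ≤ lam) :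
    LegMono (lam.cells \ nu.cells) := by
  intro i j j' hc hc' hjj
  rw [Finset.mem_sdiff] at hc
  apply Finset.card_le_card_of_injOn (fun x => (x.1, j))
  · intro x (hx : x ∈ legF (lam.cells \ nu.cells) (i, j'))
    show (x.1, j) ∈ legF (lam.cells \ nu.cells) (i, j)
    simp only [legF, mem_filter, Finset.mem_sdiff, YoungDiagram.mem_cells] at hx ⊢
    obtain ⟨⟨hxlam, hxnu⟩, hx2, hx1⟩ := hx
    refine ⟨⟨?_, ?_⟩, trivial, hx1⟩
    · exact lam.up_left_mem le_rfl (show j ≤ x.2 by omega) hxlam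
    · intro hmem
      exact hc.2 (nu.up_left_mem (le_of_lt hx1) le_rfl hmem)
  · intro x hx y hy hxy
    simp only [Finset.mem_coe, legF, mem_filter] at hx hy
    simp only [Prod.mk.injEq] at hxy
    exact Prod.ext hxy.1 (hx.2.1.trans hy.2.1.symm)

section Swap

lemma mem_swap {s : Finset (ℕ × ℕ)} {x : ℕ × ℕ} :
    x ∈ s.image Prod.swap ↔ x.swap ∈ s := by
  constructor
  · rintro hx
    obtain ⟨y, hy, rfl⟩ := Finset.mem_image.1 hx
    simpa using hy
  · intro hx
    exact Finset.mem_image.2 ⟨x.swap, hx, Prod.swap_swap x⟩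

lemma filter_swap (s : Finset (ℕ × ℕ)) (p : ℕ × ℕ → Prop) [DecidablePred p] :
    (s.image Prod.swap).filter p = (s.filter fun x => p x.swap).image Prod.swap := by
  ext x
  simp only [mem_filter, mem_image]
  constructor
  · rintro ⟨⟨y, hy, rfl⟩, hp⟩
    exact ⟨y, ⟨hy, by simpa using hp⟩, rfl⟩
  · rintro ⟨y, ⟨hy, hp⟩, rfl⟩
    exact ⟨⟨y, hy, rfl⟩, by simpa using hp⟩

lemma hook_swap (s : Finset (ℕ × ℕ)) (c : ℕ × ℕ) :
    skewHook (s.image Prod.swap) c.swap = skewHook s c := by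
  rw [skewHook, skewHook, filter_swap,
    Finset.card_image_of_injective _ Prod.swap_injective]
  congr 1
  refine Finset.filter_congr fun x _ => ?_
  rcases x with ⟨a, b⟩; rcases c with ⟨i, j⟩
  simp only [Prod.swap_prod_mk]
  constructor
  · rintro (⟨rfl, h2⟩ | ⟨rfl, h2⟩)
    · rcases Nat.eq_or_lt_of_le h2 with h3 | h3
      · exact Or.inl ⟨by omega, by omega⟩
      · exact Or.inr ⟨rfl, by omega⟩
    · exact Or.inl ⟨rfl, by omega⟩
  · rintro (⟨rfl, h2⟩ | ⟨rfl, h2⟩)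
    · rcases Nat.eq_or_lt_of_le h2 with h3 | h3
      · exact Or.inl ⟨by omega, by omega⟩
      · exact Or.inr ⟨rfl, by omega⟩
    · exact Or.inl ⟨rfl, by omega⟩

lemma rowcount_swap (s : Finset (ℕ × ℕ)) (j : ℕ) :
    ((s.image Prod.swap).filter fun x => x.1 = j).card
      = (s.filter fun x => x.2 = j).card := by
  rw [filter_swap, Finset.card_image_of_injective _ Prod.swap_injective]
  congr 1

lemma colcount_swap (s : Finset (ℕ × ℕ)) (i : ℕ) :
    ((s.image Prod.swap).filter fun x => x.2 = i).card
      = (s.filter fun x => x.1 = i).card := by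
  rw [filter_swap, Finset.card_image_of_injective _ Prod.swap_injective]
  congr 1

lemma rowColMax_swap (s : Finset (ℕ × ℕ)) :
    rowColMax (s.image Prod.swap) = rowColMax s := by
  rw [rowColMax, rowColMax, Finset.sup_image, Finset.sup_image, max_comm]
  congr 1
  · exact Finset.sup_congr rfl fun c _ => colcount_swap s c.1
  · exact Finset.sup_congr rfl fun c _ => rowcount_swap s c.2

lemma skewAft_swap (s : Finset (ℕ × ℕ)) :
    skewAft (s.image Prod.swap) = skewAft s := by
  rw [skewAft, skewAft, rowColMax_swap, Finset.card_image_of_injective _ Prod.swap_injective]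

lemma Tfilter_swap (s : Finset (ℕ × ℕ)) (t : ℕ) :
    ((s.image Prod.swap).filter fun c => t ≤ skewHook (s.image Prod.swap) c)
      = (s.filter fun c => t ≤ skewHook s c).image Prod.swap := by
  rw [filter_swap]
  congr 1
  exact Finset.filter_congr fun x _ => by rw [hook_swap]

lemma cells_transpose (lam : YoungDiagram) :
    lam.transpose.cells = lam.cells.image Prod.swap := by
  ext x
  rw [mem_swap]
  simp [YoungDiagram.mem_cells, YoungDiagram.mem_transpose]

lemma sdiff_swap (lam nu : YoungDiagram) :
    (lam.cells \ nu.cells).image Prod.swap = lam.transpose.cells \ nu.transpose.cells := by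
  rw [cells_transpose, cells_transpose, Finset.image_sdiff _ _ Prod.swap_injective]

lemma legMono_skew_swap (lam nu : YoungDiagram) (h : nu ≤ lam) :
    LegMono ((lam.cells \ nu.cells).image Prod.swap) := by
  rw [sdiff_swap]
  exact legMono_skew _ _ (YoungDiagram.transpose_mono h)

end Swap

section Counting

lemma Icc1_eq_Ioc0 (k : ℕ) : Finset.Icc 1 k = Finset.Ioc 0 k := by
  ext x
  simp only [Finset.mem_Icc, Finset.mem_Ioc]
  omega

/-- If `2t ≥ n+3`, all cells of hook length ≥ `t` lie in one row or in one column. -/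
lemma oneline (s : Finset (ℕ × ℕ)) (t : ℕ) (h2t : s.card + 3 ≤ 2 * t) :
    (∃ i, ∀ c ∈ s.filter fun c => t ≤ skewHook s c, c.1 = i) ∨
    (∃ j, ∀ c ∈ s.filter fun c => t ≤ skewHook s c, c.2 = j) := by
  set T := s.filter fun c => t ≤ skewHook s c with hTdef
  have hpair : ∀ c ∈ T, ∀ c' ∈ T, c.1 = c'.1 ∨ c.2 = c'.2 := by
    intro c hc c' hc'
    by_contra hcon
    push_neg at hcon
    obtain ⟨h1, h2⟩ := hcon
    simp only [hTdef, mem_filter] at hc hc'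
    have hKsub : hookF s c ∪ hookF s c' ⊆ s := by
      intro x hx
      rcases Finset.mem_union.1 hx with hx | hx <;> exact (Finset.mem_filter.1 hx).1
    have hint : hookF s c ∩ hookF s c' ⊆ {(c.1, c'.2), (c'.1, c.2)} := by
      intro x hx
      rw [Finset.mem_inter] at hx
      obtain ⟨hx1, hx2⟩ := hx
      simp only [hookF, mem_filter] at hx1 hx2
      simp only [Finset.mem_insert, Finset.mem_singleton]
      rcases hx1.2 with ⟨e1, l1⟩ | ⟨e1, l1⟩ <;> rcases hx2.2 with ⟨e2, l2⟩ | ⟨e2, l2⟩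
      · exact absurd (e1.symm.trans e2) h1
      · exact Or.inl (Prod.ext e1 e2)
      · exact Or.inr (Prod.ext e2 e1)
      · exact absurd (e1.symm.trans e2) h2
    have hcint : (hookF s c ∩ hookF s c').card ≤ 2 := by
      calc (hookF s c ∩ hookF s c').card
          ≤ ({(c.1, c'.2), (c'.1, c.2)} : Finset (ℕ × ℕ)).card := card_le_card hint
        _ ≤ 2 := by
            refine le_trans (Finset.card_insert_le _ _) ?_
            simp
    have hcu : (hookF s c ∪ hookF s c').card ≤ s.card := card_le_card hKsub
    have hui := Finset.card_union_add_card_inter (hookF s c) (hookF s c')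
    have hhc : t ≤ (hookF s c).card := hc.2
    have hhc' : t ≤ (hookF s c').card := hc'.2
    omega
  rcases T.eq_empty_or_nonempty with hTe | ⟨c, hc⟩
  · left
    exact ⟨0, by simp [hTe]⟩
  · by_cases hrow : ∀ c' ∈ T, c'.1 = c.1
    · exact Or.inl ⟨c.1, hrow⟩
    · push_neg at hrow
      obtain ⟨b, hb, hb1⟩ := hrow
      have hbc : b.2 = c.2 := by
        rcases hpair b hb c hc with h | h
        · exact absurd h hb1
        · exact h
      right
      refine ⟨c.2, fun e he => ?_⟩
      rcases hpair e he c hc with h | h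
      · rcases hpair e he b hb with h' | h'
        · exact absurd (h'.symm.trans h) hb1
        · exact h'.trans hbc
      · exact h

/-- The key counting dichotomy for the cells of hook length ≥ t, all lying in row `i`. -/
lemma rowcase (s : Finset (ℕ × ℕ)) (hleg : LegMono s) (t i : ℕ)
    (hT : ∀ c ∈ s.filter fun c => t ≤ skewHook s c, c.1 = i)
    (hTne : (s.filter fun c => t ≤ skewHook s c).Nonempty) :
    2 * t + 2 * (s.filter fun c => t ≤ skewHook s c).card + skewAft s ≤ 2 * s.card + 2 ∨
    (s.filter fun c => t ≤ skewHook s c).card ≤ 1 := by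
  classical
  set T := s.filter fun c => t ≤ skewHook s c with hTdef
  obtain ⟨c1, hc1⟩ := hTne
  have hc1s : c1 ∈ s := (Finset.mem_filter.1 hc1).1
  have hri : (s.filter fun x => x.1 = i).card ≤ rowColMax s := by
    have he : (s.filter fun x => x.1 = i) = (s.filter fun x => x.1 = c1.1) := by
      rw [hT c1 hc1]
    rw [he]
    exact le_trans (Finset.le_sup (f := fun c => (s.filter fun c' => c'.1 = c.1).card) hc1s)
      (le_max_left _ _)
  have hmn : rowColMax s ≤ s.card := by
    refine max_le (Finset.sup_le fun c _ => card_filter_le _ _)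
      (Finset.sup_le fun c _ => card_filter_le _ _)
  obtain ⟨cs, hcs, hcsmax⟩ := T.exists_max_image (fun c => c.2) ⟨c1, hc1⟩
  have hcsel : (i, cs.2) = cs := Prod.ext (hT cs hcs).symm rfl
  have hcss : (i, cs.2) ∈ s := by
    rw [hcsel]
    exact (Finset.mem_filter.1 hcs).1
  have hcst : t ≤ skewHook s (i, cs.2) := by
    rw [hcsel]
    exact (Finset.mem_filter.1 hcs).2
  have hkey : ∀ c ∈ T, t + T.card ≤ (s.filter fun x => x.1 = i).card
      + (s.filter fun x => x.2 = c.2).card := by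
    intro c hc
    have hceq : (i, c.2) = c := Prod.ext (hT c hc).symm rfl
    have hcjs : (i, c.2) ∈ s := by
      rw [hceq]
      exact (Finset.mem_filter.1 hc).1
    have hcsj : c.2 ≤ cs.2 := hcsmax _ hc
    set A1 := s.filter (fun x => x.1 = i ∧ c.2 ≤ x.2 ∧ x.2 < cs.2) with hA1
    set Tlt := T.filter (fun x => x.2 < c.2) with hTlt
    set Tmid := T.filter (fun x => c.2 ≤ x.2 ∧ x.2 < cs.2) with hTmid
    have harm_eq : armF s (i, c.2) = A1 ∪ armF s (i, cs.2) := by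
      ext x
      simp only [armF, hA1, mem_union, mem_filter]
      constructor
      · rintro ⟨hxs, hx1, hx2⟩
        by_cases hlt : x.2 < cs.2
        · exact Or.inl ⟨hxs, hx1, hx2, hlt⟩
        · exact Or.inr ⟨hxs, hx1, by omega⟩
      · rintro (⟨hxs, hx1, hx2, _⟩ | ⟨hxs, hx1, hx2⟩)
        · exact ⟨hxs, hx1, hx2⟩
        · exact ⟨hxs, hx1, by omega⟩
    have hdisjA : Disjoint A1 (armF s (i, cs.2)) := by
      rw [Finset.disjoint_left]
      intro x h1 h2
      simp only [hA1, armF, mem_filter] at h1 h2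
      omega
    have harm : (armF s (i, c.2)).card = A1.card + (armF s (i, cs.2)).card := by
      rw [harm_eq, card_union_of_disjoint hdisjA]
    have hTmidA1 : Tmid ⊆ A1 := by
      intro x hx
      simp only [hTmid, mem_filter] at hx
      simp only [hA1, mem_filter]
      exact ⟨(Finset.mem_filter.1 hx.1).1, hT x hx.1, hx.2.1, hx.2.2⟩
    have hTsub : T ⊆ Tlt ∪ Tmid ∪ {(i, cs.2)} := by
      intro x hx
      have hxi : x.1 = i := hT x hx
      have hxle : x.2 ≤ cs.2 := hcsmax x hx
      simp only [mem_union, Finset.mem_singleton, hTlt, hTmid, mem_filter]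
      by_cases h1 : x.2 < c.2
      · exact Or.inl (Or.inl ⟨hx, h1⟩)
      · by_cases h2 : x.2 < cs.2
        · exact Or.inl (Or.inr ⟨hx, by omega, h2⟩)
        · exact Or.inr (Prod.ext hxi (by omega))
    have hNle : T.card ≤ Tlt.card + Tmid.card + 1 := by
      calc T.card ≤ (Tlt ∪ Tmid ∪ {(i, cs.2)}).card := card_le_card hTsub
        _ ≤ (Tlt ∪ Tmid).card + 1 := by
            refine le_trans (Finset.card_union_le _ _) ?_
            simp
        _ ≤ Tlt.card + Tmid.card + 1 := by
            have := Finset.card_union_le Tlt Tmid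
            omega
    have hlegm : (legF s (i, cs.2)).card ≤ (legF s (i, c.2)).card :=
      hleg i c.2 cs.2 hcjs hcss hcsj
    have hhookj : skewHook s (i, c.2) = (armF s (i, c.2)).card + (legF s (i, c.2)).card :=
      hook_eq_arm_add_leg s _
    have hhookjs : skewHook s (i, cs.2) = (armF s (i, cs.2)).card + (legF s (i, cs.2)).card :=
      hook_eq_arm_add_leg s _
    have hmidle : Tmid.card ≤ A1.card := card_le_card hTmidA1
    have harmrow : (armF s (i, c.2)).card + Tlt.card ≤ (s.filter fun x => x.1 = i).card := by
      have hsub : armF s (i, c.2) ∪ Tlt ⊆ s.filter fun x => x.1 = i := by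
        intro x hx
        rcases Finset.mem_union.1 hx with hx | hx
        · simp only [armF, mem_filter] at hx
          simp only [mem_filter]
          exact ⟨hx.1, hx.2.1⟩
        · simp only [hTlt, mem_filter] at hx
          simp only [mem_filter]
          exact ⟨(Finset.mem_filter.1 hx.1).1, hT x hx.1⟩
      have hdisj : Disjoint (armF s (i, c.2)) Tlt := by
        rw [Finset.disjoint_left]
        intro x h1 h2
        simp only [armF, mem_filter] at h1
        simp only [hTlt, mem_filter] at h2
        omega
      calc (armF s (i, c.2)).card + Tlt.card = (armF s (i, c.2) ∪ Tlt).card :=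
            (card_union_of_disjoint hdisj).symm
        _ ≤ _ := card_le_card hsub
    have hlegcol : (legF s (i, c.2)).card + 1 ≤ (s.filter fun x => x.2 = c.2).card := by
      have hsub : insert (i, c.2) (legF s (i, c.2)) ⊆ s.filter fun x => x.2 = c.2 := by
        intro x hx
        rcases Finset.mem_insert.1 hx with rfl | hx
        · simp only [mem_filter]
          exact ⟨hcjs, trivial⟩
        · simp only [legF, mem_filter] at hx
          simp only [mem_filter]
          exact ⟨hx.1, hx.2.1⟩
      have hnm : (i, c.2) ∉ legF s (i, c.2) := by
        simp only [legF, mem_filter]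
        rintro ⟨-, -, hcon⟩
        omega
      calc (legF s (i, c.2)).card + 1 = (insert (i, c.2) (legF s (i, c.2))).card :=
            (Finset.card_insert_of_notMem hnm).symm
        _ ≤ _ := card_le_card hsub
    have hstep : t + Tmid.card ≤ skewHook s (i, c.2) := by
      have hge : Tmid.card + (armF s (i, cs.2)).card + (legF s (i, cs.2)).card
          ≤ skewHook s (i, c.2) := by
        rw [hhookj, harm]
        omega
      omega
    omega
  by_cases hcase : ∃ c ∈ T, 2 * (s.filter fun x => x.2 = c.2).card
      ≤ (s.card - (s.filter fun x => x.1 = i).card) + 2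
  · left
    obtain ⟨c, hcT, hc2⟩ := hcase
    have hk := hkey c hcT
    have haft : skewAft s = s.card - rowColMax s := rfl
    omega
  · right
    push_neg at hcase
    set r := (s.filter fun x => x.1 = i).card with hrdef
    have hoff : (s.filter fun x => ¬ x.1 = i).card + r = s.card := by
      have h0 := Finset.card_filter_add_card_filter_not (s := s)
        (p := fun x => x.1 = i)
      beta_reduce at h0
      omega
    have hcolsplit : ∀ c ∈ T, (s.filter fun x => x.2 = c.2).card
        ≤ 1 + ((s.filter fun x => ¬ x.1 = i).filter fun x => x.2 = c.2).card := by
      intro c hc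
      have hsub : (s.filter fun x => x.2 = c.2)
          ⊆ insert (i, c.2) ((s.filter fun x => ¬ x.1 = i).filter fun x => x.2 = c.2) := by
        intro x hx
        simp only [mem_filter] at hx
        by_cases hx1 : x.1 = i
        · have : x = (i, c.2) := Prod.ext hx1 hx.2
          simp [this]
        · simp only [Finset.mem_insert, mem_filter]
          exact Or.inr ⟨⟨hx.1, hx1⟩, hx.2⟩
      calc (s.filter fun x => x.2 = c.2).card
          ≤ (insert (i, c.2) ((s.filter fun x => ¬ x.1 = i).filter fun x => x.2 = c.2)).card :=
            card_le_card hsub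
        _ ≤ 1 + _ := by
            refine le_trans (Finset.card_insert_le _ _) ?_
            omega
    have hsumbi : ∑ c ∈ T, ((s.filter fun x => ¬ x.1 = i).filter fun x => x.2 = c.2).card
        ≤ (s.filter fun x => ¬ x.1 = i).card := by
      rw [← Finset.card_biUnion]
      · apply card_le_card
        intro x hx
        simp only [Finset.mem_biUnion] at hx
        obtain ⟨c, hcT, hxc⟩ := hx
        exact (Finset.mem_filter.1 hxc).1
      · intro c hcT c' hc'T hne
        have hcc : c.2 ≠ c'.2 := by
          intro he
          exact hne (Prod.ext ((hT c hcT).trans (hT c' hc'T).symm) he)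
        rw [Function.onFun, Finset.disjoint_left]
        intro x h1 h2
        simp only [mem_filter] at h1 h2
        exact hcc (h1.2 ▸ h2.2 ▸ rfl)
    by_contra hN2
    push_neg at hN2
    have hN2' : 2 ≤ T.card := hN2
    have hterm : ∀ c ∈ T, s.card - r + 1
        ≤ 2 * ((s.filter fun x => ¬ x.1 = i).filter fun x => x.2 = c.2).card := by
      intro c hc
      have h1 := hcase c hc
      have h2 := hcolsplit c hc
      omega
    have hsums : T.card * (s.card - r + 1)
        ≤ ∑ c ∈ T, 2 * ((s.filter fun x => ¬ x.1 = i).filter fun x => x.2 = c.2).card := by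
      have := Finset.card_nsmul_le_sum T
        (fun c => 2 * ((s.filter fun x => ¬ x.1 = i).filter fun x => x.2 = c.2).card)
        (s.card - r + 1) hterm
      simpa [smul_eq_mul] using this
    rw [← Finset.mul_sum] at hsums
    have hTsum : T.card * (s.card - r + 1) ≤ 2 * (s.card - r) := by
      omega
    have hge : 2 * (s.card - r + 1) ≤ T.card * (s.card - r + 1) :=
      Nat.mul_le_mul_right _ hN2'
    omega

end Counting

section Upper

lemma rowStrict (s : Finset (ℕ × ℕ)) (hleg : LegMono s) {i j j' : ℕ}
    (hc : (i, j) ∈ s) (hc' : (i, j') ∈ s) (hjj : j < j') :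
    skewHook s (i, j') < skewHook s (i, j) := by
  rw [hook_eq_arm_add_leg, hook_eq_arm_add_leg]
  have hlegm := hleg i j j' hc hc' (le_of_lt hjj)
  have harm : (armF s (i, j')).card + 1 ≤ (armF s (i, j)).card := by
    have hsub : insert (i, j) (armF s (i, j')) ⊆ armF s (i, j) := by
      intro x hx
      rcases Finset.mem_insert.1 hx with rfl | hx
      · simp only [armF, mem_filter]
        exact ⟨hc, trivial, le_rfl⟩
      · simp only [armF, mem_filter] at hx ⊢
        exact ⟨hx.1, hx.2.1, by omega⟩
    have hnm : (i, j) ∉ armF s (i, j') := by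
      simp only [armF, mem_filter]
      rintro ⟨-, -, hcon⟩
      omega
    calc (armF s (i, j')).card + 1 = (insert (i, j) (armF s (i, j'))).card :=
          (Finset.card_insert_of_notMem hnm).symm
      _ ≤ _ := card_le_card hsub
  omega

lemma sumdist (d : ℕ) : ∀ (m : ℕ) (F : Finset ℕ), F.card = m → (∀ x ∈ F, 1 ≤ x) →
    ∑ k ∈ Finset.Icc 1 m, k ^ d ≤ ∑ x ∈ F, x ^ d := by
  intro m
  induction m with
  | zero => intro F h1 h2; simp
  | succ m ih =>
    intro F hcard hpos
    have hne : F.Nonempty := by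
      rw [← Finset.card_pos, hcard]
      omega
    have hMF : F.max' hne ∈ F := F.max'_mem hne
    have hFsub : F ⊆ Finset.Icc 1 (F.max' hne) := by
      intro x hx
      rw [Finset.mem_Icc]
      exact ⟨hpos x hx, F.le_max' x hx⟩
    have hMm : m + 1 ≤ F.max' hne := by
      have h1 := card_le_card hFsub
      rw [hcard, Nat.card_Icc] at h1
      omega
    have hcard' : (F.erase (F.max' hne)).card = m := by
      rw [Finset.card_erase_of_mem hMF, hcard]
      omega
    have hih := ih (F.erase (F.max' hne)) hcard'
      (fun x hx => hpos x (Finset.mem_of_mem_erase hx))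
    rw [Finset.sum_Icc_succ_top (by omega : 1 ≤ m + 1)]
    rw [← Finset.sum_erase_add F _ hMF]
    have hpow : (m + 1) ^ d ≤ (F.max' hne) ^ d := Nat.pow_le_pow_left hMm d
    omega

lemma upper_row (d : ℕ) (hd : 1 ≤ d) (s : Finset (ℕ × ℕ)) (hleg : LegMono s) (i : ℕ)
    (hi : (s.filter fun x => x.1 = i).card = rowColMax s) :
    ∑ k ∈ Finset.Icc 1 s.card, k ^ d ≤ (∑ c ∈ s, skewHook s c ^ d) + skewAft s * s.card ^ d := by
  classical
  set R := s.filter fun x => x.1 = i with hR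
  have hmn : R.card ≤ s.card := card_filter_le _ _
  have hinj : Set.InjOn (skewHook s) R := by
    intro x hx y hy hxy
    simp only [Finset.mem_coe, hR, mem_filter] at hx hy
    obtain ⟨hxs, hxi⟩ := hx
    obtain ⟨hys, hyi⟩ := hy
    by_contra hne
    have h2 : x.2 ≠ y.2 := by
      intro h
      exact hne (Prod.ext (hxi.trans hyi.symm) h)
    have hxe : (i, x.2) = x := by
      rw [← hxi]
    have hye : (i, y.2) = y := by
      rw [← hyi]
    rcases Nat.lt_or_ge x.2 y.2 with h | h
    · have := rowStrict s hleg (show (i, x.2) ∈ s by rwa [hxe]) (show (i, y.2) ∈ s by rwa [hye]) h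
      rw [hxe, hye, hxy] at this
      omega
    · have hlt : y.2 < x.2 := by omega
      have := rowStrict s hleg (show (i, y.2) ∈ s by rwa [hye]) (show (i, x.2) ∈ s by rwa [hxe]) hlt
      rw [hxe, hye, hxy] at this
      omega
  have hcardim : (R.image (skewHook s)).card = R.card := Finset.card_image_of_injOn hinj
  have hpos : ∀ x ∈ R.image (skewHook s), 1 ≤ x := by
    intro x hx
    obtain ⟨c, hcR, rfl⟩ := Finset.mem_image.1 hx
    exact one_le_hook (Finset.mem_filter.1 hcR).1
  have hdist := sumdist d R.card (R.image (skewHook s)) hcardim hpos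
  have hsumim : ∑ x ∈ R.image (skewHook s), x ^ d = ∑ c ∈ R, skewHook s c ^ d :=
    Finset.sum_image fun x hx y hy h => hinj hx hy h
  have hRsub : ∑ c ∈ R, skewHook s c ^ d ≤ ∑ c ∈ s, skewHook s c ^ d :=
    Finset.sum_le_sum_of_subset (filter_subset _ _)
  have hsplit : (∑ k ∈ Finset.Ioc 0 R.card, k ^ d) + ∑ k ∈ Finset.Ioc R.card s.card, k ^ d
      = ∑ k ∈ Finset.Ioc 0 s.card, k ^ d :=
    Finset.sum_Ioc_consecutive _ (Nat.zero_le _) hmn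
  have htail : ∑ k ∈ Finset.Ioc R.card s.card, k ^ d ≤ (s.card - R.card) * s.card ^ d := by
    have h1 : ∀ k ∈ Finset.Ioc R.card s.card, k ^ d ≤ s.card ^ d := by
      intro k hk
      exact Nat.pow_le_pow_left (Finset.mem_Ioc.1 hk).2 d
    have := Finset.sum_le_card_nsmul _ _ _ h1
    rwa [Nat.card_Ioc, smul_eq_mul] at this
  have haft : skewAft s = s.card - R.card := by
    rw [skewAft, ← hi]
  rw [Icc1_eq_Ioc0, haft]
  rw [Icc1_eq_Ioc0] at hdist
  omega

end Upper

section Small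

lemma lowstar (s : Finset (ℕ × ℕ)) (ha : 1 ≤ skewAft s) :
    ∃ t, 1 ≤ t ∧ t ≤ s.card ∧ (s.filter fun c => t ≤ skewHook s c).card + t ≤ s.card := by
  classical
  have hmn : rowColMax s ≤ s.card := max_le (Finset.sup_le fun c _ => card_filter_le _ _)
    (Finset.sup_le fun c _ => card_filter_le _ _)
  have haft : skewAft s = s.card - rowColMax s := rfl
  by_cases hbig : ∃ c ∈ s, s.card ≤ skewHook s c
  · obtain ⟨cst, hcsts, hcstbig⟩ := hbig
    have hm1 : 1 ≤ rowColMax s := by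
      have h1 : 1 ≤ (s.filter fun c' => c'.1 = cst.1).card := by
        refine Finset.card_pos.2 ⟨cst, ?_⟩
        exact Finset.mem_filter.2 ⟨hcsts, rfl⟩
      exact le_trans h1 (le_trans
        (Finset.le_sup (f := fun c => (s.filter fun c' => c'.1 = c.1).card) hcsts)
        (le_max_left _ _))
    have han : 1 + rowColMax s ≤ s.card := by omega
    have hful : hookF s cst = s := by
      apply Finset.eq_of_subset_of_card_le (filter_subset _ _)
      exact hcstbig
    have hcross : ∀ x ∈ s, (x.1 = cst.1 ∧ cst.2 ≤ x.2) ∨ (x.2 = cst.2 ∧ cst.1 < x.1) := by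
      intro x hx
      rw [← hful] at hx
      exact (Finset.mem_filter.1 hx).2
    set row := s.filter (fun x => x.1 = cst.1) with hrowdef
    set col := s.filter (fun x => x.2 = cst.2) with hcoldef
    have hrowm : row.card ≤ rowColMax s :=
      le_trans (Finset.le_sup (f := fun c => (s.filter fun c' => c'.1 = c.1).card) hcsts)
        (le_max_left _ _)
    have hcolm : col.card ≤ rowColMax s :=
      le_trans (Finset.le_sup (f := fun c => (s.filter fun c' => c'.2 = c.2).card) hcsts)
        (le_max_right _ _)
    have hunion : row ∪ col = s := by
      apply Finset.Subset.antisymm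
      · exact Finset.union_subset (filter_subset _ _) (filter_subset _ _)
      · intro x hx
        rcases hcross x hx with ⟨h1, _⟩ | ⟨h1, _⟩
        · exact Finset.mem_union_left _ (Finset.mem_filter.2 ⟨hx, h1⟩)
        · exact Finset.mem_union_right _ (Finset.mem_filter.2 ⟨hx, h1⟩)
    have hinter : row ∩ col = {cst} := by
      apply Finset.Subset.antisymm
      · intro x hx
        rw [Finset.mem_inter] at hx
        have h1 := (Finset.mem_filter.1 hx.1).2
        have h2 := (Finset.mem_filter.1 hx.2).2
        exact Finset.mem_singleton.2 (Prod.ext h1 h2)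
      · intro x hx
        rw [Finset.mem_singleton] at hx
        subst hx
        exact Finset.mem_inter.2 ⟨Finset.mem_filter.2 ⟨hcsts, rfl⟩,
          Finset.mem_filter.2 ⟨hcsts, rfl⟩⟩
    have hcards : row.card + col.card = s.card + 1 := by
      have h := Finset.card_union_add_card_inter row col
      rw [hunion, hinter, Finset.card_singleton] at h
      omega
    have hrow2 : 2 ≤ row.card := by omega
    have hcol2 : 2 ≤ col.card := by omega
    obtain ⟨cr, hcr, hcrmax⟩ := row.exists_max_image (fun x => x.2)
      (Finset.card_pos.1 (by omega))
    have hcr1 : cr.1 = cst.1 := (Finset.mem_filter.1 hcr).2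
    have hcrs : cr ∈ s := (Finset.mem_filter.1 hcr).1
    have hrowge : ∀ x ∈ row, cst.2 ≤ x.2 := by
      intro x hx
      have hx1 := (Finset.mem_filter.1 hx).2
      rcases hcross x (Finset.mem_filter.1 hx).1 with ⟨_, h2⟩ | ⟨h2, h3⟩
      · exact h2
      · omega
    have hcrgt : cst.2 < cr.2 := by
      obtain ⟨x, hxrow, hxne⟩ := Finset.exists_mem_ne (s := row) (by omega) cst
      have hx1 := (Finset.mem_filter.1 hxrow).2
      have hxge := hrowge x hxrow
      have hx2ne : x.2 ≠ cst.2 := by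
        intro he
        exact hxne (Prod.ext hx1 he)
      have := hcrmax x hxrow
      omega
    have hcrhook : skewHook s cr ≤ 1 := by
      rw [skewHook_eq_card]
      have hsub : hookF s cr ⊆ {cr} := by
        intro y hy
        simp only [hookF, mem_filter] at hy
        obtain ⟨hys, hcond⟩ := hy
        rcases hcond with ⟨h1, h2⟩ | ⟨h1, h2⟩
        · have hyrow : y ∈ row := Finset.mem_filter.2 ⟨hys, by rw [h1, hcr1]⟩
          have := hcrmax y hyrow
          exact Finset.mem_singleton.2 (Prod.ext h1 (by omega))
        · rcases hcross y hys with ⟨g1, g2⟩ | ⟨g1, g2⟩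
          · omega
          · omega
      calc (hookF s cr).card ≤ ({cr} : Finset (ℕ × ℕ)).card := card_le_card hsub
        _ = 1 := Finset.card_singleton cr
    obtain ⟨cb, hcb, hcbmax⟩ := col.exists_max_image (fun x => x.1)
      (Finset.card_pos.1 (by omega))
    have hcb2 : cb.2 = cst.2 := (Finset.mem_filter.1 hcb).2
    have hcbs : cb ∈ s := (Finset.mem_filter.1 hcb).1
    have hcolge : ∀ x ∈ col, cst.1 ≤ x.1 := by
      intro x hx
      rcases hcross x (Finset.mem_filter.1 hx).1 with ⟨h1, h2⟩ | ⟨h1, h2⟩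
      · omega
      · omega
    have hcbgt : cst.1 < cb.1 := by
      obtain ⟨x, hxcol, hxne⟩ := Finset.exists_mem_ne (s := col) (by omega) cst
      have hx2 := (Finset.mem_filter.1 hxcol).2
      have hxge := hcolge x hxcol
      have hx1ne : x.1 ≠ cst.1 := by
        intro he
        exact hxne (Prod.ext he hx2)
      have := hcbmax x hxcol
      omega
    have hcbhook : skewHook s cb ≤ 1 := by
      rw [skewHook_eq_card]
      have hsub : hookF s cb ⊆ {cb} := by
        intro y hy
        simp only [hookF, mem_filter] at hy
        obtain ⟨hys, hcond⟩ := hy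
        rcases hcond with ⟨h1, h2⟩ | ⟨h1, h2⟩
        · rcases hcross y hys with ⟨g1, g2⟩ | ⟨g1, g2⟩
          · omega
          · have hycol : y ∈ col := Finset.mem_filter.2 ⟨hys, g1⟩
            have := hcbmax y hycol
            exact Finset.mem_singleton.2 (Prod.ext (by omega) (g1.trans hcb2.symm))
        · have hycol : y ∈ col := Finset.mem_filter.2 ⟨hys, h1.trans hcb2⟩
          have := hcbmax y hycol
          omega
      calc (hookF s cb).card ≤ ({cb} : Finset (ℕ × ℕ)).card := card_le_card hsub
        _ = 1 := Finset.card_singleton cb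
    have hne : cr ≠ cb := by
      intro he
      have := congrArg Prod.fst he
      omega
    refine ⟨2, by omega, by omega, ?_⟩
    have hsub2 : (s.filter fun c => 2 ≤ skewHook s c) ⊆ s \ {cr, cb} := by
      intro x hx
      rw [Finset.mem_sdiff]
      obtain ⟨hxs, hx2⟩ := Finset.mem_filter.1 hx
      refine ⟨hxs, ?_⟩
      intro hmem
      rcases Finset.mem_insert.1 hmem with rfl | hmem
      · omega
      · rw [Finset.mem_singleton] at hmem
        subst hmem
        omega
    have hpairsub : ({cr, cb} : Finset (ℕ × ℕ)) ⊆ s := by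
      intro x hx
      rcases Finset.mem_insert.1 hx with rfl | hx
      · exact hcrs
      · rw [Finset.mem_singleton] at hx
        subst hx
        exact hcbs
    have hcard2 : (s \ {cr, cb}).card = s.card - 2 := by
      rw [Finset.card_sdiff_of_subset hpairsub, Finset.card_insert_of_notMem (by simp [hne]),
        Finset.card_singleton]
    have hc := card_le_card hsub2
    omega
  · push_neg at hbig
    have hn1 : 1 ≤ s.card := by omega
    refine ⟨s.card, hn1, le_rfl, ?_⟩
    have hem : (s.filter fun c => s.card ≤ skewHook s c) = ∅ := by
      rw [Finset.filter_eq_empty_iff]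
      intro x hx
      have := hbig x hx
      omega
    rw [hem, Finset.card_empty]
    omega

end Small

section Boost

lemma boost (lam nu : YoungDiagram) (hle : nu ≤ lam) (t : ℕ)
    (hn : 8 ≤ (lam.cells \ nu.cells).card)
    (ht0 : (lam.cells \ nu.cells).card / 2 + 2 ≤ t)
    (ht1 : t ≤ (lam.cells \ nu.cells).card / 2 + 2 + (lam.cells \ nu.cells).card / 20) :
    5 * ((lam.cells \ nu.cells).filter fun c => t ≤ skewHook (lam.cells \ nu.cells) c).card
      + skewAft (lam.cells \ nu.cells)
      ≤ 5 * ((lam.cells \ nu.cells).card + 1 - t) := by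
  classical
  set s := lam.cells \ nu.cells with hsdef
  have haftle : skewAft s ≤ s.card := Nat.sub_le _ _
  have h2t : s.card + 3 ≤ 2 * t := by omega
  rcases (s.filter fun c => t ≤ skewHook s c).eq_empty_or_nonempty with hTe | hTne
  · rw [hTe, Finset.card_empty]
    omega
  · rcases oneline s t h2t with ⟨i, hi⟩ | ⟨j, hj⟩
    · rcases rowcase s (legMono_skew lam nu hle) t i hi hTne with hA | hB
      · omega
      · omega
    · set s' := s.image Prod.swap with hs'
      have hleg' : LegMono s' := legMono_skew_swap lam nu hle
      have hT' : ∀ c ∈ s'.filter fun c => t ≤ skewHook s' c, c.1 = j := by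
        intro c hc
        rw [hs', Tfilter_swap] at hc
        obtain ⟨y, hy, rfl⟩ := Finset.mem_image.1 hc
        exact hj y hy
      have hTne' : (s'.filter fun c => t ≤ skewHook s' c).Nonempty := by
        rw [hs', Tfilter_swap]
        exact hTne.image _
      have hcard' : s'.card = s.card := Finset.card_image_of_injective _ Prod.swap_injective
      have haft' : skewAft s' = skewAft s := skewAft_swap s
      have hN' : (s'.filter fun c => t ≤ skewHook s' c).card
          = (s.filter fun c => t ≤ skewHook s c).card := by
        rw [hs', Tfilter_swap, Finset.card_image_of_injective _ Prod.swap_injective]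
      rcases rowcase s' hleg' t j hT' hTne' with hA | hB
      · rw [hcard', haft', hN'] at hA
        omega
      · rw [hN'] at hB
        omega

end Boost

section UpperMain

lemma rowsup_swap (s : Finset (ℕ × ℕ)) :
    ((s.image Prod.swap).sup fun c => ((s.image Prod.swap).filter fun c' => c'.1 = c.1).card)
      = s.sup fun c => (s.filter fun c' => c'.2 = c.2).card := by
  rw [Finset.sup_image]
  exact Finset.sup_congr rfl fun c _ => rowcount_swap s c.2

lemma colsup_swap (s : Finset (ℕ × ℕ)) :
    ((s.image Prod.swap).sup fun c => ((s.image Prod.swap).filter fun c' => c'.2 = c.2).card)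
      = s.sup fun c => (s.filter fun c' => c'.1 = c.1).card := by
  rw [Finset.sup_image]
  exact Finset.sup_congr rfl fun c _ => colcount_swap s c.1

lemma upper_main (d : ℕ) (hd : 1 ≤ d) (lam nu : YoungDiagram) (hle : nu ≤ lam) :
    ∑ k ∈ Finset.Icc 1 (lam.cells \ nu.cells).card, k ^ d
      ≤ (∑ c ∈ lam.cells \ nu.cells, skewHook (lam.cells \ nu.cells) c ^ d)
        + skewAft (lam.cells \ nu.cells) * (lam.cells \ nu.cells).card ^ d := by
  classical
  set s := lam.cells \ nu.cells with hsdef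
  rcases s.eq_empty_or_nonempty with hse | hsne
  · rw [hse]
    simp
  · rcases le_or_gt (s.sup fun c => (s.filter fun c' => c'.2 = c.2).card)
        (s.sup fun c => (s.filter fun c' => c'.1 = c.1).card) with hAB | hAB
    · obtain ⟨c0, hc0, hc0e⟩ := Finset.exists_mem_eq_sup s hsne
        (fun c => (s.filter fun c' => c'.1 = c.1).card)
      refine upper_row d hd s (legMono_skew lam nu hle) c0.1 ?_
      rw [rowColMax, max_eq_left hAB, hc0e]
    · have hleg2 : LegMono (s.image Prod.swap) := legMono_skew_swap lam nu hle
      have hs2ne : (s.image Prod.swap).Nonempty := hsne.image _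
      have hr2 : ((s.image Prod.swap).sup fun c =>
            ((s.image Prod.swap).filter fun c' => c'.2 = c.2).card)
          ≤ ((s.image Prod.swap).sup fun c =>
            ((s.image Prod.swap).filter fun c' => c'.1 = c.1).card) := by
        rw [rowsup_swap, colsup_swap]
        exact le_of_lt hAB
      obtain ⟨c0, hc0, hc0e⟩ := Finset.exists_mem_eq_sup (s.image Prod.swap) hs2ne
        (fun c => ((s.image Prod.swap).filter fun c' => c'.1 = c.1).card)
      have h1 := upper_row d hd (s.image Prod.swap) hleg2 c0.1
        (by rw [rowColMax, max_eq_left hr2, hc0e])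
      have hcard2 : (s.image Prod.swap).card = s.card :=
        Finset.card_image_of_injective _ Prod.swap_injective
      have haft2 : skewAft (s.image Prod.swap) = skewAft s := skewAft_swap s
      have hsum2 : ∑ c ∈ s.image Prod.swap, skewHook (s.image Prod.swap) c ^ d
          = ∑ c ∈ s, skewHook s c ^ d := by
        rw [Finset.sum_image (fun x _ y _ h => Prod.swap_injective h)]
        refine Finset.sum_congr rfl fun c _ => ?_
        rw [hook_swap]
      rw [hcard2, haft2, hsum2] at h1
      exact h1

end UpperMain

section RealSide

lemma diff_eq (d : ℕ) (hd : 1 ≤ d) (s : Finset (ℕ × ℕ)) :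
    (∑ k ∈ Finset.Icc 1 s.card, (k : ℝ) ^ d) - ∑ c ∈ s, (skewHook s c : ℝ) ^ d
      = ∑ t ∈ Finset.Icc 1 s.card, ((t ^ d - (t - 1) ^ d : ℕ) : ℝ)
          * (((s.card + 1 - t : ℕ) : ℝ)
            - ((s.filter fun c => t ≤ skewHook s c).card : ℝ)) := by
  have h1 := pow_sum_identity d hd s.card
  have h2 := hook_sum_identity d hd s
  have hc1 : (∑ k ∈ Finset.Icc 1 s.card, (k : ℝ) ^ d)
      = ((∑ t ∈ Finset.Icc 1 s.card, (t ^ d - (t - 1) ^ d) * (s.card + 1 - t) : ℕ) : ℝ) := by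
    rw [← h1]
    push_cast
    rfl
  have hc2 : (∑ c ∈ s, (skewHook s c : ℝ) ^ d)
      = ((∑ t ∈ Finset.Icc 1 s.card,
          (t ^ d - (t - 1) ^ d) * (s.filter fun c => t ≤ skewHook s c).card : ℕ) : ℝ) := by
    rw [← h2]
    push_cast
    rfl
  rw [hc1, hc2, Nat.cast_sum, Nat.cast_sum, ← Finset.sum_sub_distrib]
  refine Finset.sum_congr rfl fun t ht => ?_
  push_cast
  ring

end RealSide

end HookAux

open HookAux in
/-- uniform `Θ`-estimate for hook power sums.
Fix a positive integer `d`.  There are constants `c, C > 0` such that for every skew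
shape `λ/ν` with `n = |λ/ν|` cells,
`c·aft(λ/ν)·n^d ≤ Σ_{k=1}^n k^d − Σ_{c ∈ λ/ν} h_c^d ≤ C·aft(λ/ν)·n^d`. -/
theorem hook_power_sum_theta_aft (d : ℕ) (hd : 1 ≤ d) :
    ∃ c C : ℝ, 0 < c ∧ 0 < C ∧
      ∀ lam nu : YoungDiagram, nu ≤ lam →
        c * (skewAft (lam.cells \ nu.cells) : ℝ) *
            ((lam.cells \ nu.cells).card : ℝ) ^ d ≤
          (∑ k ∈ Finset.Icc 1 (lam.cells \ nu.cells).card, (k : ℝ) ^ d) -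
            ∑ x ∈ lam.cells \ nu.cells, (skewHook (lam.cells \ nu.cells) x : ℝ) ^ d ∧
        (∑ k ∈ Finset.Icc 1 (lam.cells \ nu.cells).card, (k : ℝ) ^ d) -
            ∑ x ∈ lam.cells \ nu.cells, (skewHook (lam.cells \ nu.cells) x : ℝ) ^ d ≤
          C * (skewAft (lam.cells \ nu.cells) : ℝ) *
            ((lam.cells \ nu.cells).card : ℝ) ^ d := by
  obtain ⟨e, rfl⟩ : ∃ e, d = e + 1 := ⟨d - 1, by omega⟩
  refine ⟨1 / 200 ^ (e + 2), 1, by positivity, one_pos, ?_⟩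
  intro lam nu hle
  set s := lam.cells \ nu.cells with hsdef
  have hterm : ∀ t ∈ Finset.Icc 1 s.card, (0:ℝ) ≤ ((t ^ (e+1) - (t - 1) ^ (e+1) : ℕ) : ℝ)
      * (((s.card + 1 - t : ℕ) : ℝ) - ((s.filter fun c => t ≤ skewHook s c).card : ℝ)) := by
    intro t ht
    rw [Finset.mem_Icc] at ht
    have hcl := claimI s t ht.1 (by omega)
    have hle2 : ((s.filter fun c => t ≤ skewHook s c).card : ℝ)
        ≤ ((s.card + 1 - t : ℕ) : ℝ) := by
      have hle2' : (s.filter fun c => t ≤ skewHook s c).card ≤ s.card + 1 - t := by omega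
      exact_mod_cast hle2'
    exact mul_nonneg (Nat.cast_nonneg _) (by linarith)
  constructor
  · -- lower bound
    rw [diff_eq (e+1) (by omega) s]
    rcases le_or_gt 8 s.card with h8 | h8
    · -- large n
      have hIsub : Finset.Icc (s.card/2+2) (s.card/2+2+s.card/20) ⊆ Finset.Icc 1 s.card := by
        intro t ht
        rw [Finset.mem_Icc] at ht ⊢
        omega
      have hlowterm : ∀ t ∈ Finset.Icc (s.card/2+2) (s.card/2+2+s.card/20),
          ((s.card:ℝ)/2)^e * ((skewAft s : ℝ)/5)
            ≤ ((t ^ (e+1) - (t - 1) ^ (e+1) : ℕ) : ℝ)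
              * (((s.card + 1 - t : ℕ) : ℝ)
                - ((s.filter fun c => t ≤ skewHook s c).card : ℝ)) := by
        intro t ht
        rw [Finset.mem_Icc] at ht
        have hb := boost lam nu hle t h8 ht.1 ht.2
        have hwn : ((s.card:ℝ)/2)^e ≤ ((t ^ (e+1) - (t - 1) ^ (e+1) : ℕ) : ℝ) := by
          have hw := w_ge (e+1) t (by omega) (by omega)
          rw [Nat.add_sub_cancel] at hw
          have h2 : ((t^e : ℕ):ℝ) ≤ ((t ^ (e+1) - (t - 1) ^ (e+1) : ℕ) : ℝ) :=
            Nat.cast_le.2 hw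
          have h0 : ((s.card:ℝ)/2) ≤ (t:ℝ) := by
            have h0' : s.card ≤ 2 * t := by omega
            have h0'' : ((s.card:ℕ):ℝ) ≤ ((2*t : ℕ):ℝ) := Nat.cast_le.2 h0'
            push_cast at h0''
            linarith
          calc ((s.card:ℝ)/2)^e ≤ (t:ℝ)^e := pow_le_pow_left₀ (by positivity) h0 e
            _ ≤ _ := by
                push_cast at h2
                exact h2
        have hDn : ((skewAft s:ℝ)/5) ≤ (((s.card + 1 - t : ℕ) : ℝ)
            - ((s.filter fun c => t ≤ skewHook s c).card : ℝ)) := by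
          have h2 : ((5 * (s.filter fun c => t ≤ skewHook s c).card + skewAft s : ℕ):ℝ)
              ≤ ((5 * (s.card + 1 - t) : ℕ):ℝ) := Nat.cast_le.2 hb
          push_cast at h2
          linarith
        exact mul_le_mul hwn hDn (by positivity) (Nat.cast_nonneg _)
      have hsum1 := Finset.sum_le_sum_of_subset_of_nonneg hIsub (fun t ht _ => hterm t ht)
      have hsum2 := Finset.card_nsmul_le_sum _ _ _ hlowterm
      rw [nsmul_eq_mul] at hsum2
      have hcardI : (Finset.Icc (s.card/2+2) (s.card/2+2+s.card/20)).card = s.card/20 + 1 := by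
        rw [Nat.card_Icc]
        omega
      have hcge : ((s.card:ℝ)/20)
          ≤ ((Finset.Icc (s.card/2+2) (s.card/2+2+s.card/20)).card : ℝ) := by
        rw [hcardI]
        have hg : s.card ≤ 20 * (s.card/20) + 19 := by omega
        have hg' : ((s.card:ℕ):ℝ) ≤ ((20 * (s.card/20) + 19 : ℕ):ℝ) := Nat.cast_le.2 hg
        push_cast at hg' ⊢
        linarith
      have hA : ((s.card:ℝ)/20) * (((s.card:ℝ)/2)^e * ((skewAft s:ℝ)/5))
          ≤ ((Finset.Icc (s.card/2+2) (s.card/2+2+s.card/20)).card : ℝ)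
            * (((s.card:ℝ)/2)^e * ((skewAft s:ℝ)/5)) :=
        mul_le_mul_of_nonneg_right hcge (by positivity)
      have hfrac : (1 / 200 ^ (e + 2) : ℝ) ≤ 1 / (100 * 2^e) := by
        apply one_div_le_one_div_of_le
        · positivity
        · calc (100:ℝ) * 2^e ≤ 100 * 200^e := by
                have := pow_le_pow_left₀ (by norm_num : (0:ℝ) ≤ 2) (by norm_num : (2:ℝ) ≤ 200) e
                nlinarith
            _ ≤ 200^(e+2) := by
                rw [pow_add]
                have h200 : (0:ℝ) ≤ 200^e := by positivity
                nlinarith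
      have heq : ((s.card:ℝ)/20) * (((s.card:ℝ)/2)^e * ((skewAft s:ℝ)/5))
          = (1 / (100 * 2^e)) * ((skewAft s : ℝ) * (s.card:ℝ)^(e+1)) := by
        rw [div_pow, pow_succ]
        field_simp
        ring
      have hkey : (1 / 200 ^ (e + 2) : ℝ) * (skewAft s : ℝ) * ((s.card:ℝ))^(e+1)
          ≤ ((s.card:ℝ)/20) * (((s.card:ℝ)/2)^e * ((skewAft s:ℝ)/5)) := by
        rw [heq]
        have hnn : (0:ℝ) ≤ (skewAft s : ℝ) * (s.card:ℝ)^(e+1) := by positivity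
        calc (1 / 200 ^ (e + 2) : ℝ) * (skewAft s : ℝ) * ((s.card:ℝ))^(e+1)
            = (1 / 200 ^ (e + 2) : ℝ) * ((skewAft s : ℝ) * (s.card:ℝ)^(e+1)) := by ring
          _ ≤ (1 / (100 * 2^e)) * ((skewAft s : ℝ) * (s.card:ℝ)^(e+1)) :=
              mul_le_mul_of_nonneg_right hfrac hnn
      linarith
    · -- small n
      rcases Nat.eq_zero_or_pos (skewAft s) with ha0 | ha1
      · rw [ha0]
        have := Finset.sum_nonneg hterm
        simpa using this
      · obtain ⟨tstar, ht1s, ht2s, ht3s⟩ := lowstar s ha1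
        have htmem : tstar ∈ Finset.Icc 1 s.card := Finset.mem_Icc.2 ⟨ht1s, ht2s⟩
        have hsingle := Finset.single_le_sum hterm htmem
        have hwr : (1:ℝ) ≤ ((tstar ^ (e+1) - (tstar - 1)^(e+1) : ℕ):ℝ) := by
          have hw := w_ge (e+1) tstar (by omega) ht1s
          rw [Nat.add_sub_cancel] at hw
          have h1 : 1 ≤ tstar ^ e := Nat.one_le_pow e tstar (by omega)
          exact_mod_cast by omega
        have hD : (1:ℝ) ≤ ((s.card + 1 - tstar : ℕ):ℝ)
            - ((s.filter fun c => tstar ≤ skewHook s c).card : ℝ) := by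
          have h1 : (s.filter fun c => tstar ≤ skewHook s c).card + 1 ≤ s.card + 1 - tstar := by
            omega
          have h2 : (((s.filter fun c => tstar ≤ skewHook s c).card + 1 : ℕ):ℝ)
              ≤ ((s.card + 1 - tstar : ℕ):ℝ) := Nat.cast_le.2 h1
          push_cast at h2
          linarith
        have hterm1 : (1:ℝ) ≤ ((tstar ^ (e+1) - (tstar - 1)^(e+1) : ℕ):ℝ)
            * (((s.card + 1 - tstar : ℕ):ℝ)
              - ((s.filter fun c => tstar ≤ skewHook s c).card : ℝ)) := by
          calc (1:ℝ) = 1 * 1 := by norm_num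
            _ ≤ _ := mul_le_mul hwr hD (by norm_num) (le_trans zero_le_one hwr)
        have hbound : (1 / 200 ^ (e + 2) : ℝ) * (skewAft s : ℝ) * ((s.card:ℝ))^(e+1) ≤ 1 := by
          have ha7 : (skewAft s : ℝ) ≤ 7 := by
            have ha7' : skewAft s ≤ 7 := le_trans (Nat.sub_le _ _) (by omega)
            exact_mod_cast ha7'
          have hn7 : ((s.card:ℝ))^(e+1) ≤ 7^(e+1) := by
            apply pow_le_pow_left₀ (Nat.cast_nonneg _)
            exact_mod_cast (by omega : s.card ≤ 7)
          have h7 : (7:ℝ)^(e+2) ≤ 200^(e+2) :=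
            pow_le_pow_left₀ (by norm_num) (by norm_num) _
          calc (1 / 200 ^ (e + 2) : ℝ) * (skewAft s : ℝ) * ((s.card:ℝ))^(e+1)
              ≤ (1 / 200 ^ (e + 2) : ℝ) * 7 * 7^(e+1) := by
                have hc1 : (1 / 200 ^ (e + 2) : ℝ) * (skewAft s : ℝ)
                    ≤ (1 / 200 ^ (e + 2) : ℝ) * 7 :=
                  mul_le_mul_of_nonneg_left ha7 (by positivity)
                exact mul_le_mul hc1 hn7 (by positivity) (by positivity)
            _ = 7^(e+2) / 200^(e+2) := by ring
            _ ≤ 1 := by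
                rw [div_le_one (by positivity)]
                exact h7
        linarith
  · -- upper bound
    have hup := upper_main (e+1) (by omega) lam nu hle
    rw [← hsdef] at hup
    have hupr : ((∑ k ∈ Finset.Icc 1 s.card, k ^ (e+1) : ℕ) : ℝ)
        ≤ (((∑ c ∈ s, skewHook s c ^ (e+1)) + skewAft s * s.card ^ (e+1) : ℕ) : ℝ) :=
      Nat.cast_le.2 hup
    push_cast at hupr
    rw [one_mul]
    linarith
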